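/- Let c_1,…,c_n be reals with c_1 = 0 and c_n = 1, and let d_1,…,d_n be reals with d_1 = d_n = 1 and d_i ≠ 0 for all i. Set A = F·D, Ã = T·(D·A·G)ᵀ·T, C = diag(c_1,…,c_n), and C̃ = I − T·C·T. Then Tr(P·Ã·C̃·Ã·C̃) = Tr(P·A·A·C) − Tr(P·A·A·C·C) + Tr(P·A·A·A·C). -/

import Mathlib

open Finset Matrix
/-- The matrix `D` with entries `d_{ij}`: `0` for `i < j`, `d_i` for `i = j`, and
`-d_j · (∏_{k=j+1}^{i-1} (1 - d_k)) · d_i` for `i > j`. -/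
def Dmat (n : ℕ) (d : Fin n → ℝ) : Matrix (Fin n) (Fin n) ℝ :=
  Matrix.of fun i j =>
    if i < j then 0
    else if i = j then d i
    else -(d j) * (∏ k ∈ Finset.Ioo j i, (1 - d k)) * d i

/-- The lower-triangular matrix `G` with `G_{ii} = 1/d_i`, `G_{ij} = 1` for `i > j`. -/
noncomputable def Gmat (n : ℕ) (d : Fin n → ℝ) : Matrix (Fin n) (Fin n) ℝ :=
  Matrix.of fun i j => if i = j then 1 / d i else if j < i then 1 else 0

/-- The matrix `F` with `F_{ij} = c_i - c_j` for `i > j` and `0` otherwise. -/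
def Fmat (n : ℕ) (c : Fin n → ℝ) : Matrix (Fin n) (Fin n) ℝ :=
  Matrix.of fun i j => if j < i then c i - c j else 0

/-- The antidiagonal permutation matrix `T`, `T_{ij} = 1` iff `i + j = n + 1` (1-based). -/
def Tmat (n : ℕ) : Matrix (Fin n) (Fin n) ℝ :=
  Matrix.of fun i j => if (i : ℕ) + (j : ℕ) + 1 = n then 1 else 0

/-- The matrix `P` whose last column consists of ones and all other entries are `0`. -/
def Pmat (n : ℕ) : Matrix (Fin n) (Fin n) ℝ :=
  Matrix.of fun _ j => if (j : ℕ) + 1 = n then 1 else 0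

/-!
Everything rests on two structural facts: `G = D⁻¹` (the column sums of `D` telescope by
`∏ (1 - d_k) = 1 - ∑_k d_k ∏_{m < k} (1 - d_m)`), and `F = C G - G C`; together they give
`G (I - C) D = I - C + A`. As `T` is an involution, `Ã C̃ = T Bᵀ (I - C) T` with `B = D A G`,
and transposing turns the left side into `Tr ((I - C) B (I - C) B E)`, where `E` has ones in its
first row and zeros elsewhere. The boundary values say that the first column of `G` is all
ones (`d_1 = 1`), the first column of `F` is `c` (`c_1 = 0`) and the last row of `F` is
`1 - c` (`c_n = 1`); hence `B E = D C J` and `J (I - C) = P F` for the all-ones matrix `J`,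
and the trace becomes `Tr (P A A (I - C + A) C)`.
-/

section
variable {n : ℕ}

theorem Gmat_mul_apply (d : Fin n → ℝ) (M : Matrix (Fin n) (Fin n) ℝ) (i j : Fin n) :
    (Gmat n d * M) i j = M i j / d i + ∑ k ∈ Iio i, M k j := by
  have hG : ∀ k, Gmat n d i k * M k j
      = (if i = k then M k j / d i else 0) + if k < i then M k j else 0 := fun k => by
    by_cases hik : i = k
    · simp [Gmat, hik, div_eq_inv_mul]
    · simp [Gmat, hik]
  simp only [mul_apply, hG, sum_add_distrib, sum_ite_eq, mem_univ, if_true, ← sum_filter]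
  rw [filter_gt_eq_Iio]

theorem sum_Iio_Dmat_apply (d : Fin n → ℝ) {i j : Fin n} (hji : j < i) :
    ∑ k ∈ Iio i, Dmat n d k j = d j * ∏ k ∈ Ioo j i, (1 - d k) := by
  have hsub : Ico j i ⊆ Iio i := fun k hk => mem_Iio.mpr (mem_Ico.mp hk).2
  rw [← sum_subset hsub fun k hk hk' => by
    simp [Dmat, show k < j by simpa [mem_Iio.mp hk] using hk'],
    ← Ioo_insert_left hji, sum_insert (by simp), prod_one_sub_ordered, mul_sub, mul_one, mul_sum]
  have hjj : Dmat n d j j = d j := by simp [Dmat]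
  rw [hjj, sub_eq_add_neg, ← sum_neg_distrib]
  refine congrArg _ (sum_congr rfl fun k hk => ?_)
  obtain ⟨hjk, hki⟩ := mem_Ioo.mp hk
  simp [Dmat, hjk.not_gt, hjk.ne', Ioo_filter_lt, min_eq_right hki.le]
  ring

theorem Gmat_mul_Dmat (d : Fin n → ℝ) (hd : ∀ i, d i ≠ 0) : Gmat n d * Dmat n d = 1 := by
  ext i j
  rw [Gmat_mul_apply, one_apply]
  rcases lt_trichotomy j i with hji | rfl | hij
  · rw [sum_Iio_Dmat_apply d hji]
    field_simp [hd i]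
    simp only [Dmat, of_apply, if_neg hji.not_gt, if_neg hji.ne']
    ring
  · have hcol : ∑ k ∈ Iio j, Dmat n d k j = 0 :=
      sum_eq_zero fun k hk => by simp [Dmat, mem_Iio.mp hk]
    rw [hcol]
    simp [Dmat, hd j]
  · have hcol : ∑ k ∈ Iio i, Dmat n d k j = 0 :=
      sum_eq_zero fun k hk => by simp [Dmat, (mem_Iio.mp hk).trans hij]
    rw [hcol]
    simp [Dmat, hij, hij.ne]

theorem Fmat_eq_diagonal_mul_sub_mul_diagonal (c d : Fin n → ℝ) :
    Fmat n c = diagonal c * Gmat n d - Gmat n d * diagonal c := by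
  ext i j
  rcases eq_or_ne i j with rfl | hij
  · simp [Fmat, mul_comm]
  · simp only [Fmat, Gmat, of_apply, Matrix.sub_apply, diagonal_mul, mul_diagonal, if_neg hij]
    split_ifs <;> ring

theorem Gmat_mul_one_sub_diagonal_mul_Dmat (c d : Fin n → ℝ) (hd : ∀ i, d i ≠ 0) :
    Gmat n d * (1 - diagonal c) * Dmat n d = 1 - diagonal c + Fmat n c * Dmat n d := by
  rw [Fmat_eq_diagonal_mul_sub_mul_diagonal c d]
  simp only [mul_sub, sub_mul, mul_one, Matrix.mul_assoc, Gmat_mul_Dmat d hd]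
  abel

theorem Gmat_mul_vecMulVec_single (d : Fin n → ℝ) {z : Fin n} (hz : (z : ℕ) = 0)
    (hdz : d z = 1) : Gmat n d * vecMulVec (Pi.single z 1) 1 = vecMulVec 1 1 := by
  rw [mul_vecMulVec, mulVec_single_one]
  congr 1
  ext i
  rcases eq_or_ne i z with rfl | hiz
  · simp [Gmat, hdz]
  · have hzi : z < i := by omega
    simp [Gmat, hiz, hzi]

theorem Dmat_mul_vecMulVec_one (d : Fin n → ℝ) (hd : ∀ i, d i ≠ 0) {z : Fin n}
    (hz : (z : ℕ) = 0) (hdz : d z = 1) :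
    Dmat n d * vecMulVec 1 1 = vecMulVec (Pi.single z 1) 1 := by
  rw [← Gmat_mul_vecMulVec_single d hz hdz, ← Matrix.mul_assoc,
    mul_eq_one_comm.mp (Gmat_mul_Dmat d hd), Matrix.one_mul]

theorem Fmat_mul_vecMulVec_single (c : Fin n → ℝ) {z : Fin n} (hz : (z : ℕ) = 0)
    (hcz : c z = 0) : Fmat n c * vecMulVec (Pi.single z 1) 1 = diagonal c * vecMulVec 1 1 := by
  ext i j
  simp only [mul_vecMulVec, mulVec_single_one, diagonal_mul, vecMulVec_apply, col_apply, Fmat,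
    of_apply, Pi.one_apply, mul_one]
  rcases eq_or_ne i z with rfl | hiz
  · simp [hcz]
  · have hzi : z < i := by omega
    simp [hzi, hcz]

theorem Dmat_mul_Fmat_mul_Dmat_mul_Gmat_mul_vecMulVec_single (c d : Fin n → ℝ)
    (hd : ∀ i, d i ≠ 0) {z : Fin n} (hz : (z : ℕ) = 0) (hcz : c z = 0) (hdz : d z = 1) :
    Dmat n d * (Fmat n c * Dmat n d) * Gmat n d * vecMulVec (Pi.single z 1) 1
      = Dmat n d * diagonal c * vecMulVec 1 1 := by
  rw [Matrix.mul_assoc, Gmat_mul_vecMulVec_single d hz hdz, Matrix.mul_assoc, Matrix.mul_assoc,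
    Dmat_mul_vecMulVec_one d hd hz hdz, Fmat_mul_vecMulVec_single c hz hcz,
    Matrix.mul_assoc]

theorem Pmat_mul_apply {l : Fin n} (hl : (l : ℕ) + 1 = n) (M : Matrix (Fin n) (Fin n) ℝ)
    (i j : Fin n) : (Pmat n * M) i j = M l j := by
  have hlast : ∀ k : Fin n, (k : ℕ) + 1 = n ↔ k = l := fun k => by rw [Fin.ext_iff]; omega
  simp [mul_apply, Pmat, hlast]

theorem vecMulVec_one_mul_one_sub_diagonal (c : Fin n → ℝ) {l : Fin n} (hl : (l : ℕ) + 1 = n)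
    (hcl : c l = 1) : vecMulVec 1 1 * (1 - diagonal c) = Pmat n * Fmat n c := by
  ext i j
  simp only [Pmat_mul_apply hl, vecMulVec_mul, vecMulVec_apply, Pi.one_apply, one_mul, Fmat,
    of_apply, vecMul_sub, vecMul_one, vecMul_diagonal, Pi.sub_apply, Pi.one_apply, one_mul]
  rcases eq_or_ne j l with rfl | hjl
  · simp [hcl]
  · have hjl' : j < l := by omega
    simp [hjl', hcl]

theorem Tmat_apply (i j : Fin n) : Tmat n i j = if j = i.rev then 1 else 0 := by
  have hrev : (i : ℕ) + j + 1 = n ↔ j = i.rev := by rw [Fin.ext_iff, Fin.val_rev]; omega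
  simp [Tmat, hrev]

theorem Tmat_mul_apply (M : Matrix (Fin n) (Fin n) ℝ) (i j : Fin n) :
    (Tmat n * M) i j = M i.rev j := by
  simp [mul_apply, Tmat_apply]

theorem Tmat_transpose : (Tmat n)ᵀ = Tmat n := by
  ext i j
  simp only [transpose_apply, Tmat, of_apply, add_comm (j : ℕ)]

theorem Tmat_mul_Tmat : Tmat n * Tmat n = 1 := by
  ext i j
  simp [Tmat_mul_apply, Tmat_apply, one_apply, eq_comm]

theorem Tmat_mul_Tmat_mul (X : Matrix (Fin n) (Fin n) ℝ) : Tmat n * (Tmat n * X) = X := by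
  rw [← Matrix.mul_assoc, Tmat_mul_Tmat, Matrix.one_mul]

theorem one_sub_Tmat_mul_mul_Tmat (X : Matrix (Fin n) (Fin n) ℝ) :
    1 - Tmat n * X * Tmat n = Tmat n * (1 - X) * Tmat n := by
  rw [mul_sub, sub_mul, Matrix.mul_one, Tmat_mul_Tmat]

theorem Tmat_mul_transpose_Pmat_mul_Tmat {z : Fin n} (hz : (z : ℕ) = 0) :
    Tmat n * (Pmat n)ᵀ * Tmat n = vecMulVec (Pi.single z 1) 1 := by
  ext i j
  rw [Matrix.mul_assoc, Tmat_mul_apply, ← Tmat_transpose, ← transpose_mul, transpose_apply,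
    Tmat_mul_apply]
  have hfirst : n - (i + 1) + 1 = n ↔ (i : ℕ) = 0 := by omega
  simp [Pmat, Pi.single_apply, Fin.ext_iff, hz, hfirst]

theorem trace_Pmat_mul_Tmat_mul_mul_Tmat {z : Fin n} (hz : (z : ℕ) = 0)
    (X : Matrix (Fin n) (Fin n) ℝ) :
    trace (Pmat n * (Tmat n * X * Tmat n)) = trace (Xᵀ * vecMulVec (Pi.single z 1) 1) := by
  rw [← trace_transpose, ← Tmat_mul_transpose_Pmat_mul_Tmat hz]
  simp only [transpose_mul, Tmat_transpose, Matrix.mul_assoc]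
  rw [trace_mul_comm (Tmat n)]
  simp only [Matrix.mul_assoc]

end

theorem stmt_15 (n : ℕ) (hn : 2 ≤ n) (c d : Fin n → ℝ)
    (hc1 : c ⟨0, by omega⟩ = 0) (hcn : c ⟨n - 1, by omega⟩ = 1)
    (hd1 : d ⟨0, by omega⟩ = 1)
    (hd : ∀ i : Fin n, d i ≠ 0)
    (A Atil C Ctil : Matrix (Fin n) (Fin n) ℝ)
    (hA : A = Fmat n c * Dmat n d)
    (hAtil : Atil = Tmat n * (Dmat n d * A * Gmat n d)ᵀ * Tmat n)
    (hC : C = Matrix.diagonal c)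
    (hCtil : Ctil = 1 - Tmat n * C * Tmat n) :
    Matrix.trace (Pmat n * Atil * Ctil * Atil * Ctil) =
      Matrix.trace (Pmat n * A * A * C) - Matrix.trace (Pmat n * A * A * C * C) +
        Matrix.trace (Pmat n * A * A * A * C) := by
  have hBE := Dmat_mul_Fmat_mul_Dmat_mul_Gmat_mul_vecMulVec_single c d hd rfl hc1 hd1
  have hJ := vecMulVec_one_mul_one_sub_diagonal c (l := ⟨n - 1, by omega⟩)
    (Nat.sub_add_cancel (by omega)) hcn
  have hkey := Gmat_mul_one_sub_diagonal_mul_Dmat c d hd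
  have hTrace := trace_Pmat_mul_Tmat_mul_mul_Tmat (n := n) (z := ⟨0, by omega⟩) rfl
  rw [← hC, ← hA] at hBE
  rw [← hC] at hJ hkey
  rw [hCtil, one_sub_Tmat_mul_mul_Tmat]
  have hCt : Cᵀ = C := by rw [hC, diagonal_transpose]
  have hTT := Tmat_mul_Tmat_mul (n := n)
  set D := Dmat n d
  set G := Gmat n d
  set T := Tmat n
  set P := Pmat n
  set B := D * A * G
  set J : Matrix (Fin n) (Fin n) ℝ := vecMulVec 1 1
  calc trace (P * Atil * (T * (1 - C) * T) * Atil * (T * (1 - C) * T))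
      = trace (P * (T * (Bᵀ * (1 - C) * Bᵀ * (1 - C)) * T)) := by
        rw [hAtil]
        simp only [Matrix.mul_assoc, hTT]
    _ = trace ((1 - C) * B * (1 - C) * (B * vecMulVec (Pi.single ⟨0, by omega⟩ 1) 1)) := by
        rw [hTrace]
        simp only [transpose_mul, transpose_sub, transpose_one, transpose_transpose, hCt,
          Matrix.mul_assoc]
    _ = trace (J * ((1 - C) * D * A * (G * (1 - C) * D) * C)) := by
        rw [hBE, trace_mul_comm J]
        simp only [B, Matrix.mul_assoc]
    _ = trace (P * A * A * (1 - C + A) * C) := by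
        simp only [hkey, ← Matrix.mul_assoc]
        rw [hJ, Matrix.mul_assoc P, ← hA]
    _ = trace (P * A * A * C) - trace (P * A * A * C * C) + trace (P * A * A * A * C) := by
        rw [← trace_sub, ← trace_add]
        congr 1
        noncomm_ring
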